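/- Let q > 0 and define L(a) = ∫_1^∞ (v^{2q} − 1)^{−1/2} · sinh(a) · (1 + v² sinh(a)²)^{−1/2} dv for a > 0. Then L(a) tends to π/(2q) as a → ∞. -/

import Mathlib

/-!
With `s = sinh a`, the factor `s (1 + v² s²)^(-1/2) = (s⁻² + v²)^(-1/2)` is at most `v⁻¹` and
tends to it as `a → ∞`, so by dominated convergence `L(a) → ∫₁^∞ (v^{2q} - 1)^(-1/2) v⁻¹ dv`.
That integrand is the derivative of `arccos (v^{-q}) / q`, which vanishes at `v = 1` and tends
to `π / (2q)` at infinity.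
-/

/-- The half-height of the r-catenoid with neck radius `a` in `ℍⁿ × ℝ`. -/
noncomputable def catL (q a : ℝ) : ℝ :=
  ∫ v in Set.Ioi (1 : ℝ),
    (v ^ (2 * q) - 1) ^ (-(1 : ℝ) / 2) * Real.sinh a *
      (1 + v ^ 2 * Real.sinh a ^ 2) ^ (-(1 : ℝ) / 2)

open Real MeasureTheory Filter Set Topology

theorem Real.tendsto_sinh_atTop : Tendsto sinh atTop atTop :=
  tendsto_atTop_mono' atTop
    ((eventually_ge_atTop 0).mono fun _ hx => self_le_sinh_iff.2 hx) tendsto_id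

theorem rpow_neg_half_eq_inv_sqrt {x : ℝ} (hx : 0 ≤ x) :
    x ^ (-(1 : ℝ) / 2) = (√x)⁻¹ := by
  rw [sqrt_eq_rpow, ← rpow_neg hx]
  ring_nf

theorem sq_rpow_neg_half {x : ℝ} (hx : 0 ≤ x) : (x ^ 2) ^ (-(1 : ℝ) / 2) = x⁻¹ := by
  rw [rpow_neg_half_eq_inv_sqrt (by positivity), sqrt_sq hx]

section Kernel

variable {s v : ℝ}

theorem mul_one_add_sq_mul_sq_rpow_neg_half (hs : 0 < s) :
    s * (1 + v ^ 2 * s ^ 2) ^ (-(1 : ℝ) / 2) = (s⁻¹ ^ 2 + v ^ 2) ^ (-(1 : ℝ) / 2) := by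
  have hfactor : 1 + v ^ 2 * s ^ 2 = s ^ 2 * (s⁻¹ ^ 2 + v ^ 2) := by field_simp
  rw [hfactor, mul_rpow (by positivity) (by positivity), sq_rpow_neg_half hs.le,
    mul_inv_cancel_left₀ hs.ne']

theorem mul_one_add_sq_mul_sq_rpow_neg_half_le_inv (hs : 0 < s) (hv : 0 < v) :
    s * (1 + v ^ 2 * s ^ 2) ^ (-(1 : ℝ) / 2) ≤ v⁻¹ := by
  rw [mul_one_add_sq_mul_sq_rpow_neg_half hs, ← sq_rpow_neg_half hv.le]
  exact rpow_le_rpow_of_nonpos (by positivity) (by nlinarith) (by norm_num)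

theorem tendsto_mul_one_add_sq_mul_sq_rpow_neg_half (hv : 0 < v) :
    Tendsto (fun s => s * (1 + v ^ 2 * s ^ 2) ^ (-(1 : ℝ) / 2)) atTop (𝓝 v⁻¹) := by
  have hlim : Tendsto (fun s : ℝ => s⁻¹ ^ 2 + v ^ 2) atTop (𝓝 (v ^ 2)) := by
    simpa using (tendsto_inv_atTop_zero.pow 2).add_const (v ^ 2)
  rw [← sq_rpow_neg_half hv.le]
  refine ((continuousAt_rpow_const _ _ (Or.inl (by positivity))).tendsto.comp hlim).congr' ?_
  filter_upwards [eventually_gt_atTop 0] with s hs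
  exact (mul_one_add_sq_mul_sq_rpow_neg_half hs).symm

end Kernel

section ArccosPrimitive

variable {q v : ℝ}

theorem rpow_two_mul_sub_one_pos (hq : 0 < q) (hv : 1 < v) : 0 < v ^ (2 * q) - 1 :=
  sub_pos.2 (one_lt_rpow hv (by positivity))

theorem hasDerivAt_arccos_rpow_neg_div (hq : 0 < q) (hv : 1 < v) :
    HasDerivAt (fun v => arccos (v ^ (-q)) / q)
      ((v ^ (2 * q) - 1) ^ (-(1 : ℝ) / 2) * v⁻¹) v := by
  have hv0 : 0 < v := one_pos.trans hv
  have hw : 1 < v ^ q := one_lt_rpow hv hq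
  have hneg : v ^ (-q) = (v ^ q)⁻¹ := rpow_neg hv0.le q
  have hlt : v ^ (-q) < 1 := hneg ▸ inv_lt_one_of_one_lt₀ hw
  have hgt : -1 < v ^ (-q) := by linarith [rpow_pos_of_pos hv0 (-q)]
  refine ((hasDerivAt_arccos hgt.ne' hlt.ne).comp v
    (hasDerivAt_rpow_const (p := -q) (Or.inl hv0.ne'))).div_const q |>.congr_deriv ?_
  have hsq : 1 - (v ^ q)⁻¹ ^ 2 = (v ^ q)⁻¹ ^ 2 * ((v ^ q) ^ 2 - 1) := by field_simp
  have hpos : 0 < (v ^ q) ^ 2 - 1 := by nlinarith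
  rw [rpow_sub_one hv0.ne', hneg, mul_comm 2 q, rpow_mul hv0.le, rpow_two, hsq,
    sqrt_mul (by positivity), sqrt_sq (by positivity), rpow_neg_half_eq_inv_sqrt hpos.le]
  field_simp

theorem tendsto_arccos_rpow_neg_div (hq : 0 < q) :
    Tendsto (fun v => arccos (v ^ (-q)) / q) atTop (𝓝 (π / (2 * q))) := by
  have h := ((continuous_arccos.tendsto 0).comp (tendsto_rpow_neg_atTop hq)).div_const q
  rwa [arccos_zero, div_div] at h

theorem continuousAt_arccos_rpow_neg_div : ContinuousAt (fun v => arccos (v ^ (-q)) / q) 1 :=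
  (continuous_arccos.continuousAt.comp
    (continuousAt_rpow_const 1 (-q) (Or.inl one_ne_zero))).div_const q

theorem rpow_two_mul_sub_one_rpow_neg_half_mul_inv_nonneg (hq : 0 < q) (hv : 1 < v) :
    0 ≤ (v ^ (2 * q) - 1) ^ (-(1 : ℝ) / 2) * v⁻¹ :=
  mul_nonneg (rpow_nonneg (rpow_two_mul_sub_one_pos hq hv).le _)
    (inv_nonneg.2 (zero_le_one.trans hv.le))

theorem integrableOn_rpow_two_mul_sub_one_rpow_neg_half_mul_inv (hq : 0 < q) :
    IntegrableOn (fun v : ℝ => (v ^ (2 * q) - 1) ^ (-(1 : ℝ) / 2) * v⁻¹) (Ioi 1) :=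
  integrableOn_Ioi_deriv_of_nonneg continuousAt_arccos_rpow_neg_div.continuousWithinAt
    (fun _ hv => hasDerivAt_arccos_rpow_neg_div hq hv)
    (fun _ hv => rpow_two_mul_sub_one_rpow_neg_half_mul_inv_nonneg hq hv)
    (tendsto_arccos_rpow_neg_div hq)

theorem integral_rpow_two_mul_sub_one_rpow_neg_half_mul_inv (hq : 0 < q) :
    ∫ v in Ioi (1 : ℝ), (v ^ (2 * q) - 1) ^ (-(1 : ℝ) / 2) * v⁻¹ = π / (2 * q) := by
  rw [integral_Ioi_of_hasDerivAt_of_nonneg continuousAt_arccos_rpow_neg_div.continuousWithinAt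
    (fun _ hv => hasDerivAt_arccos_rpow_neg_div hq hv)
    (fun _ hv => rpow_two_mul_sub_one_rpow_neg_half_mul_inv_nonneg hq hv)
    (tendsto_arccos_rpow_neg_div hq)]
  simp

end ArccosPrimitive

/-- `L(a) → π/(2q)` as `a → ∞`. -/
theorem stmt_10 (q : ℝ) (hq : 0 < q) :
    Filter.Tendsto (fun a => catL q a) Filter.atTop (nhds (Real.pi / (2 * q))) := by
  rw [← integral_rpow_two_mul_sub_one_rpow_neg_half_mul_inv hq]
  refine tendsto_integral_filter_of_dominated_convergence _ ?_ ?_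
    (integrableOn_rpow_two_mul_sub_one_rpow_neg_half_mul_inv hq) ?_
  · exact Eventually.of_forall fun a => by fun_prop
  · filter_upwards [eventually_gt_atTop 0] with a ha
    refine (ae_restrict_iff' measurableSet_Ioi).2 (ae_of_all _ fun v (hv : 1 < v) => ?_)
    have hf := (rpow_two_mul_sub_one_pos hq hv).le
    rw [norm_of_nonneg (by positivity), mul_assoc]
    exact mul_le_mul_of_nonneg_left
      (mul_one_add_sq_mul_sq_rpow_neg_half_le_inv (sinh_pos_iff.2 ha) (by linarith))
      (rpow_nonneg hf _)
  · refine (ae_restrict_iff' measurableSet_Ioi).2 (ae_of_all _ fun v (hv : 1 < v) => ?_)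
    have hkernel :=
      (tendsto_mul_one_add_sq_mul_sq_rpow_neg_half (by linarith)).comp tendsto_sinh_atTop
    simpa only [Function.comp_def, mul_assoc] using hkernel.const_mul _
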